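/- Let V and W be complex Banach spaces. Let A : ℝ → (V →L[ℂ] V), B : ℝ → (W →L[ℂ] V), C : ℝ → (V →L[ℂ] W), D : ℝ → (W →L[ℂ] W) be families of bounded linear operators. Suppose Q : ℝ → (V →L[ℂ] V), P : ℝ → (V →L[ℂ] W) and G : ℝ → (V →L[ℂ] W) satisfy, for every t in an open interval I: HasDerivAt Q (A t ∘ Q t + B t ∘ P t) t and HasDerivAt P (C t ∘ Q t + D t ∘ P t) t (derivatives in operator norm), the Riccati relation P t = G t ∘ Q t, and Q t is invertible in the Banach algebra V →L[ℂ] V. Then for every t ∈ I, G satisfies HasDerivAt G (C t + D t ∘ G t - G t ∘ (A t + B t ∘ G t)) t. -/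

import Mathlib

/-! On `I` the relation `P = G ∘ Q` reads `G = P ∘ Q⁻¹`, and `Q⁻¹` is differentiable with
derivative `-Q⁻¹ Q' Q⁻¹`. The product rule then gives
`G' = (C Q + D P) Q⁻¹ - P Q⁻¹ (A Q + B P) Q⁻¹`, which is `C + D G - G (A + B G)` once
`P Q⁻¹` is replaced by `G`. -/

open Filter ContinuousLinearMap

theorem HasDerivAt.clm_comp_restrictScalars {𝕜 𝕜' : Type*} [NontriviallyNormedField 𝕜]
    [NontriviallyNormedField 𝕜'] [NormedAlgebra 𝕜 𝕜'] {U V W : Type*}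
    [NormedAddCommGroup U] [NormedSpace 𝕜' U]
    [NormedAddCommGroup V] [NormedSpace 𝕜' V] [NormedSpace 𝕜 V] [IsScalarTower 𝕜 𝕜' V]
    [NormedAddCommGroup W] [NormedSpace 𝕜' W] [NormedSpace 𝕜 W] [IsScalarTower 𝕜 𝕜' W]
    {c : 𝕜 → V →L[𝕜'] W} {c' : V →L[𝕜'] W} {d : 𝕜 → U →L[𝕜'] V} {d' : U →L[𝕜'] V} {x : 𝕜}
    (hc : HasDerivAt c c' x) (hd : HasDerivAt d d' x) :
    HasDerivAt (fun y => (c y).comp (d y)) (c'.comp (d x) + (c x).comp d') x := by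
  simpa [add_comm] using ((compL 𝕜' U V W).bilinearRestrictScalars 𝕜).hasDerivAt_of_bilinear
    (fun _ => hc) (fun _ => hd)

theorem HasDerivAt.ringInverse {𝕜 R : Type*} [NontriviallyNormedField 𝕜] [NormedRing R]
    [HasSummableGeomSeries R] [NormedAlgebra 𝕜 R] {f : 𝕜 → R} {f' : R} {x : 𝕜}
    (hf : HasDerivAt f f' x) (hx : IsUnit (f x)) :
    HasDerivAt (fun y => Ring.inverse (f y))
      (-(Ring.inverse (f x) * f' * Ring.inverse (f x))) x := by
  obtain ⟨u, hu⟩ := hx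
  have h := hasFDerivAt_ringInverse (𝕜 := 𝕜) u
  rw [hu] at h
  simpa [← hu, Function.comp_def] using h.comp_hasDerivAt x hf

theorem ContinuousLinearMap.comp_comp_ringInverse {R V W : Type*} [Semiring R]
    [TopologicalSpace V] [AddCommMonoid V] [Module R V]
    [TopologicalSpace W] [AddCommMonoid W] [Module R W]
    (g : V →L[R] W) {q : V →L[R] V} (hq : IsUnit q) :
    (g.comp q).comp (Ring.inverse q) = g := by
  rw [comp_assoc, ← mul_def, Ring.mul_inverse_cancel q hq, one_def, comp_id]

theorem riccati_rhs_of_mul_eq_one {R V W : Type*} [Ring R]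
    [TopologicalSpace V] [AddCommGroup V] [IsTopologicalAddGroup V] [Module R V]
    [TopologicalSpace W] [AddCommGroup W] [IsTopologicalAddGroup W] [Module R W]
    (A : V →L[R] V) (B : W →L[R] V)
    (C : V →L[R] W) (D : W →L[R] W) (Q Qi : V →L[R] V) (P : V →L[R] W) (hQ : Q * Qi = 1) :
    (C.comp Q + D.comp P).comp Qi + P.comp (-(Qi * (A.comp Q + B.comp P) * Qi)) =
      C + D.comp (P.comp Qi) - (P.comp Qi).comp (A + B.comp (P.comp Qi)) := by
  rw [mul_def, one_def] at hQ
  simp only [mul_def, add_comp, comp_add, comp_neg, comp_assoc, hQ, comp_id]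
  abel

theorem operator_riccati_of_linear_flow_general
    {V W : Type*} [NormedAddCommGroup V] [NormedSpace ℂ V] [CompleteSpace V]
    [NormedAddCommGroup W] [NormedSpace ℂ W]
    (A : ℝ → V →L[ℂ] V) (B : ℝ → W →L[ℂ] V)
    (C : ℝ → V →L[ℂ] W) (D : ℝ → W →L[ℂ] W)
    (Q : ℝ → V →L[ℂ] V) (P G : ℝ → V →L[ℂ] W)
    (I : Set ℝ) (hI : IsOpen I)
    (hQ : ∀ t ∈ I, HasDerivAt Q ((A t).comp (Q t) + (B t).comp (P t)) t)
    (hP : ∀ t ∈ I, HasDerivAt P ((C t).comp (Q t) + (D t).comp (P t)) t)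
    (hric : ∀ t ∈ I, P t = (G t).comp (Q t))
    (hinv : ∀ t ∈ I, IsUnit (Q t)) :
    ∀ t ∈ I,
      HasDerivAt G (C t + (D t).comp (G t) - (G t).comp (A t + (B t).comp (G t))) t := by
  have hG : ∀ x ∈ I, G x = (P x).comp (Ring.inverse (Q x)) := fun x hx => by
    rw [hric x hx, comp_comp_ringInverse _ (hinv x hx)]
  intro t ht
  have hderiv := (hP t ht).clm_comp_restrictScalars ((hQ t ht).ringInverse (hinv t ht))
  rw [riccati_rhs_of_mul_eq_one _ _ _ _ _ _ _ (Ring.mul_inverse_cancel _ (hinv t ht)),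
    ← hG t ht] at hderiv
  exact hderiv.congr_of_eventuallyEq (eventually_of_mem (hI.mem_nhds ht) hG)

/-- Operator version of the forward Grassmannian projection: if bounded-operator
families `Q`, `P` solve the base and auxiliary equations `∂ₜQ = A∘Q + B∘P`,
`∂ₜP = C∘Q + D∘P` on an open interval on which `Q t` is invertible, and `G`
satisfies the Riccati relation `P = G ∘ Q` there, then `G` solves the operator
Riccati evolution equation `∂ₜG = C + D∘G − G∘(A + B∘G)`. -/
theorem operator_riccati_of_linear_flow
    {V W : Type*} [NormedAddCommGroup V] [NormedSpace ℂ V] [CompleteSpace V]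
    [NormedAddCommGroup W] [NormedSpace ℂ W] [CompleteSpace W]
    (A : ℝ → V →L[ℂ] V) (B : ℝ → W →L[ℂ] V)
    (C : ℝ → V →L[ℂ] W) (D : ℝ → W →L[ℂ] W)
    (Q : ℝ → V →L[ℂ] V) (P G : ℝ → V →L[ℂ] W)
    (I : Set ℝ) (hI : IsOpen I)
    (hQ : ∀ t ∈ I, HasDerivAt Q ((A t).comp (Q t) + (B t).comp (P t)) t)
    (hP : ∀ t ∈ I, HasDerivAt P ((C t).comp (Q t) + (D t).comp (P t)) t)
    (hric : ∀ t ∈ I, P t = (G t).comp (Q t))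
    (hinv : ∀ t ∈ I, IsUnit (Q t)) :
    ∀ t ∈ I,
      HasDerivAt G (C t + (D t).comp (G t) - (G t).comp (A t + (B t).comp (G t))) t :=
  operator_riccati_of_linear_flow_general A B C D Q P G I hI hQ hP hric hinv
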